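/- Let K be a field and W ⊆ K^E a realization of a connected matroid M. Suppose E = E₁ ⊔ E₂ is a 2-separation of M. Then, up to nonzero square constant factors (for suitable choices of bases), the configuration polynomial satisfies ψ_W = ψ_{W/E₁} · ψ_{W|_{E₁}} + ψ_{W|_{E₂}} · ψ_{W/E₂}. -/

import Mathlib

open scoped BigOperators

namespace Config

variable {K : Type} [Field K] {E : Type} [Fintype E] [DecidableEq E]

/-- The coordinate functional `e^∨` of `K^E` restricted to a subspace `W ⊆ K^E`. -/
noncomputable def coordFun (W : Submodule K (E → K)) (e : E) : W →ₗ[K] K :=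
  (LinearMap.proj e).comp W.subtype

/-- `S ⊆ E` is independent in the matroid `M_W` realized by the configuration `W`:
the restricted coordinate functionals `(e^∨|_W)_{e ∈ S}` are linearly independent. -/
def Indep (W : Submodule K (E → K)) (S : Finset E) : Prop :=
  LinearIndependent K (fun e : S => coordFun W e)

/-- A circuit of the matroid `M_W`: a minimal dependent subset of `E`. -/
def IsCircuit (W : Submodule K (E → K)) (C : Finset E) : Prop :=
  ¬ Indep W C ∧ ∀ D ⊂ C, Indep W D

/-- The matroid `M_W` is connected: the ground set is nonempty and any two distinct
elements lie on a common circuit. -/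
def Connected (W : Submodule K (E → K)) : Prop :=
  Nonempty E ∧ ∀ e f : E, e ≠ f → ∃ C : Finset E, IsCircuit W C ∧ e ∈ C ∧ f ∈ C

/-- `w` is a (linear) basis of the configuration `W ⊆ K^E`. -/
def IsBasisOf {r : ℕ} (w : Fin r → E → K) (W : Submodule K (E → K)) : Prop :=
  LinearIndependent K w ∧ Submodule.span K (Set.range w) = W

/-- The coefficient `c_{W,B} = (det (w^i_e)_{1≤i≤r, e∈B})²`, the squared determinant of
the `r × r` submatrix of the coefficient matrix of `w` with column set `B` (the square
is independent of the chosen ordering of the columns). -/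
noncomputable def cSq {r : ℕ} (w : Fin r → E → K) (B : Finset E) : K :=
  if h : B.card = r then
    (Matrix.det (Matrix.of fun i j : Fin r =>
      w i ((Finset.equivFinOfCardEq h).symm j : E))) ^ 2
  else 0

/-- The configuration polynomial `ψ_W = ∑_B c_{W,B} · x^B` computed from the basis `w`
(the coefficient `c_{W,B}` vanishes unless `B` is a basis of the matroid `M_W`). -/
noncomputable def psi {r : ℕ} (w : Fin r → E → K) : MvPolynomial E K :=
  ∑ B ∈ Finset.univ.powersetCard r,
    MvPolynomial.C (cSq w B) * ∏ e ∈ B, MvPolynomial.X e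

/-- The rank in `M_W` of a subset `S ⊆ E`: the dimension of the image of `W`
under the projection onto the coordinates in `S`. -/
noncomputable def rkOn (W : Submodule K (E → K)) (S : Finset E) : ℕ :=
  Module.finrank K (W.map (LinearMap.funLeft K K (fun e : {x : E // x ∈ S} => (e : E))))

/-- `S` is a `k`-separation of the matroid `M_W`:
`λ(S) = rk S + rk Sᶜ − rk M < k ≤ min (|S|, |Sᶜ|)`. -/
def KSep (W : Submodule K (E → K)) (k : ℕ) (S : Finset E) : Prop :=
  rkOn W S + rkOn W Sᶜ < rkOn W Finset.univ + k ∧ k ≤ S.card ∧ k ≤ Sᶜ.card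

/-- The matroid `M_W` is 3-connected: it has no 1-separation and no 2-separation. -/
def ThreeConnected (W : Submodule K (E → K)) : Prop :=
  ∀ S : Finset E, ¬ KSep W 1 S ∧ ¬ KSep W 2 S

/-- The restriction configuration `W|_F ⊆ K^F`: the image of `W` under the
coordinate projection `K^E ↠ K^F`. -/
noncomputable def restrictConfig (W : Submodule K (E → K)) (F : Finset E) :
    Submodule K ({x : E // x ∈ F} → K) :=
  W.map (LinearMap.funLeft K K (fun x : {x : E // x ∈ F} => (x : E)))

/-- The deletion configuration `W ∖ F = W|_{E ∖ F} ⊆ K^{E ∖ F}`. -/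
noncomputable def deleteConfig (W : Submodule K (E → K)) (F : Finset E) :
    Submodule K ({x : E // x ∉ F} → K) :=
  W.map (LinearMap.funLeft K K (fun x : {x : E // x ∉ F} => (x : E)))

/-- The contraction configuration `W/F = W ∩ K^{E ∖ F} ⊆ K^{E ∖ F}`: the vectors of `W`
vanishing on `F`, viewed in the coordinates `E ∖ F`. -/
noncomputable def contractConfig (W : Submodule K (E → K)) (F : Finset E) :
    Submodule K ({x : E // x ∉ F} → K) :=
  (W ⊓ LinearMap.ker (LinearMap.funLeft K K (fun x : {x : E // x ∈ F} => (x : E)))).map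
    (LinearMap.funLeft K K (fun x : {x : E // x ∉ F} => (x : E)))

end Config

/-!
Let `U₁ = W ∩ K^{E₁}` and `U₂ = W ∩ K^{E₂}` be the vectors of `W` vanishing on `E₂`, resp. `E₁`.
By rank–nullity `λ(E₁) = dim W - dim U₁ - dim U₂`. A `2`-separation has `λ < 2`, and connectivity
forces `λ ≥ 1`: if `W = U₁ ⊕ U₂`, a linear relation among the coordinates of a circuit restricts to
relations on both of its sides, so no circuit meets both `E₁` and `E₂`.

Hence `W` has a basis `(u, z, v)` with `u` a basis of `U₁` and `v` one of `U₂`. In its coefficient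
matrix the `v`-rows vanish on `E₁` and the `u`-rows on `E₂`, so every maximal minor is block
triangular. Writing `[x | C]` for the minor of the rows `x` on the columns `C`, the minor on `B`
factors as `[u, z | B ∩ E₁] · [v | B ∩ E₂]` if `|B ∩ E₁| = dim U₁ + 1`, as
`[u | B ∩ E₁] · [z, v | B ∩ E₂]` if `|B ∩ E₁| = dim U₁`, and vanishes otherwise. Summing over `B`
gives the identity for this basis, since `(u, z)|_{E₁}`, `v|_{E₂}`, `(z, v)|_{E₂}` and `u|_{E₁}` are
bases of `W|_{E₁}`, `W/E₁`, `W|_{E₂}` and `W/E₂`. Any other choice of bases only multiplies each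
configuration polynomial by the square of the determinant of the base change.
-/

namespace Config

open MvPolynomial

variable {K : Type} [Field K] {E : Type}

theorem det_submatrix_sq {ι n R : Type*} [Fintype ι] [DecidableEq ι] [Fintype n] [DecidableEq n]
    [CommRing R] (M : Matrix n n R) (ρ σ : ι ≃ n) :
    (M.submatrix ρ σ).det ^ 2 = M.det ^ 2 := by
  have h : M.submatrix ρ σ = (M.submatrix ρ ρ).submatrix id (σ.trans ρ.symm) := by
    ext; simp
  rw [h, Matrix.det_permute', Matrix.det_submatrix_equiv_self, mul_pow, ← Int.cast_pow,
    ← Units.val_pow_eq_pow_val, Int.units_sq, Units.val_one, Int.cast_one, one_mul]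

theorem det_eq_zero_of_rows_vanish_off {ι ι' : Type*} [Fintype ι] [DecidableEq ι] [Fintype ι']
    (M : Matrix ι ι K) (ρ : ι' ↪ ι) (J : Finset ι) (hJ : J.card < Fintype.card ι')
    (h : ∀ i, ∀ j ∉ J, M (ρ i) j = 0) : M.det = 0 := by
  -- otherwise the rows `M (ρ i)` would be independent inside a space of dimension `J.card`
  by_contra hM
  let f : (ι → K) →ₗ[K] (J → K) := LinearMap.funLeft K K Subtype.val
  let g : (ι → K) →ₗ[K] ({j // j ∉ J} → K) := LinearMap.funLeft K K Subtype.val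
  have hrows : LinearIndependent K fun i => M (ρ i) :=
    (Matrix.linearIndependent_rows_of_det_ne_zero hM).comp ρ ρ.injective
  have hdisj : Disjoint (Submodule.span K (Set.range fun i => M (ρ i))) (LinearMap.ker f) := by
    have hg : Submodule.span K (Set.range fun i => M (ρ i)) ≤ LinearMap.ker g :=
      Submodule.span_le.2 <| Set.range_subset_iff.2 fun i => funext fun j => h i j j.2
    refine Submodule.disjoint_def.2 fun x hx hfx => funext fun j => ?_
    by_cases hj : j ∈ J
    · exact congrFun hfx ⟨j, hj⟩
    · exact congrFun (hg hx) ⟨j, hj⟩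
  have := (hrows.map hdisj).fintype_card_le_finrank
  simp only [Module.finrank_fintype_fun_eq_card, Fintype.card_coe] at this
  omega

theorem cSq_eq_det_sq {ι : Type*} [Fintype ι] [DecidableEq ι] {r : ℕ} (w : Fin r → E → K)
    (B : Finset E) (ρ : ι ≃ Fin r) (e : ι ≃ B) :
    cSq w B = (Matrix.of fun i j => w (ρ i) (e j)).det ^ 2 := by
  have hB : B.card = r := by
    simpa using (Fintype.card_congr e).symm.trans (Fintype.card_congr ρ)
  rw [cSq, dif_pos hB, ← det_submatrix_sq _ ρ (e.trans (Finset.equivFinOfCardEq hB))]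
  congr 2
  ext; simp

theorem cSq_of_card_ne {r : ℕ} (w : Fin r → E → K) {B : Finset E} (hB : B.card ≠ r) :
    cSq w B = 0 :=
  dif_neg hB

theorem cSq_comp_equiv {r r' : ℕ} (w : Fin r → E → K) (σ : Fin r' ≃ Fin r) (B : Finset E) :
    cSq (w ∘ σ) B = cSq w B := by
  by_cases hB : B.card = r'
  · rw [cSq_eq_det_sq _ B (Equiv.refl _) (Finset.equivFinOfCardEq hB).symm,
      cSq_eq_det_sq _ B σ (Finset.equivFinOfCardEq hB).symm]
    rfl
  · have hr : r' = r := by simpa using Fintype.card_congr σ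
    rw [cSq_of_card_ne _ hB, cSq_of_card_ne _ (hr ▸ hB)]

theorem cSq_comp_embedding {E' : Type} {r : ℕ} (w : Fin r → E → K) (σ : E' ↪ E)
    (B : Finset E') : cSq (fun i x => w i (σ x)) B = cSq w (B.map σ) := by
  by_cases hB : B.card = r
  · let e := (Finset.equivFinOfCardEq hB).symm
    rw [cSq_eq_det_sq _ B (Equiv.refl _) e,
      cSq_eq_det_sq _ _ (Equiv.refl _) (e.trans (Finset.equivMap σ B))]
    rfl
  · rw [cSq_of_card_ne _ hB, cSq_of_card_ne _ (by simpa using hB)]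

theorem cSq_append_comm {m n : ℕ} (a : Fin m → E → K) (b : Fin n → E → K) (B : Finset E) :
    cSq (Fin.append a b) B = cSq (Fin.append b a) B := by
  have : Fin.append a b = Fin.append b a ∘ finAddFlip := by
    ext i : 1
    refine Fin.addCases (fun k => ?_) (fun k => ?_) i <;> simp
  rw [this, cSq_comp_equiv]

theorem cSq_smul_sum {r : ℕ} (w : Fin r → E → K) (P : Matrix (Fin r) (Fin r) K) (B : Finset E) :
    cSq (fun i => ∑ j, P i j • w j) B = P.det ^ 2 * cSq w B := by
  by_cases hB : B.card = r
  · let e := (Finset.equivFinOfCardEq hB).symm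
    rw [cSq_eq_det_sq _ B (Equiv.refl _) e, cSq_eq_det_sq _ B (Equiv.refl _) e, ← mul_pow,
      ← Matrix.det_mul]
    congr 2
    ext i j
    simp [Matrix.mul_apply, Finset.sum_apply]
  · rw [cSq_of_card_ne _ hB, cSq_of_card_ne _ hB, mul_zero]

theorem cSq_eq_zero_of_rows_vanish_off {r n : ℕ} (w : Fin r → E → K) (ρ : Fin n ↪ Fin r)
    {B T : Finset E} (hT : T.card < n) (h : ∀ i, ∀ e ∈ B, e ∉ T → w (ρ i) e = 0) :
    cSq w B = 0 := by
  by_cases hB : B.card = r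
  · let e := (Finset.equivFinOfCardEq hB).symm
    rw [cSq_eq_det_sq w B (Equiv.refl _) e, sq_eq_zero_iff]
    classical
    refine det_eq_zero_of_rows_vanish_off _ ρ (Finset.univ.filter fun j => (e j : E) ∈ T) ?_
      fun i j hj => h i _ (e j).2 (by simpa using hj)
    refine lt_of_le_of_lt (Finset.card_le_card_of_injOn (fun j => (e j : E)) ?_ ?_) (by simpa)
    · intro j hj; simpa using hj
    · intro j _ j' _ hjj'; exact e.injective (Subtype.ext hjj')
  · exact cSq_of_card_ne w hB

theorem cSq_append_of_right_vanish [DecidableEq E] {m n : ℕ} (a : Fin m → E → K)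
    (b : Fin n → E → K) {S : Finset E} (hb : ∀ i, ∀ e ∈ S, b i e = 0) {B : Finset E}
    (hB : (B \ S).card ≤ n) :
    cSq (Fin.append a b) B = cSq a (B ∩ S) * cSq b (B \ S) := by
  have hcard := Finset.card_inter_add_card_sdiff B S
  rcases hB.lt_or_eq with hlt | hn
  · -- the `n` rows of `b` live on the fewer than `n` columns `B \ S`
    rw [cSq_of_card_ne b hlt.ne, mul_zero]
    refine cSq_eq_zero_of_rows_vanish_off _ (Fin.natAddEmb m) hlt fun i e he heS => ?_
    simpa using hb i e (by simpa [he] using heS)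
  by_cases hm : (B ∩ S).card = m
  swap
  · rw [cSq_of_card_ne a hm, zero_mul, cSq_of_card_ne]
    omega
  let e₁ := (Finset.equivFinOfCardEq hm).symm
  let e₂ := (Finset.equivFinOfCardEq hn).symm
  let eB : Fin m ⊕ Fin n ≃ B :=
    (e₁.sumCongr e₂).trans <| (Equiv.Finset.union _ _ (Finset.disjoint_sdiff_inter B S).symm).trans
      (Equiv.subtypeEquivRight fun x => by rw [Finset.union_comm, Finset.sdiff_union_inter])
  rw [cSq_eq_det_sq _ B finSumFinEquiv eB, cSq_eq_det_sq _ _ (Equiv.refl _) e₁,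
    cSq_eq_det_sq _ _ (Equiv.refl _) e₂, ← mul_pow, ← Matrix.det_fromBlocks_zero₂₁ _
      (Matrix.of fun i j => a i (e₂ j))]
  congr 2
  ext (i | i) (j | j)
  · simp [eB]
  · simp [eB]
  · simpa [eB] using hb i _ (Finset.mem_inter.1 (e₁ j).2).2
  · simp [eB]

theorem IsBasisOf.finrank_eq {r : ℕ} {w : Fin r → E → K} {V : Submodule K (E → K)}
    (hw : IsBasisOf w V) : Module.finrank K V = r := by
  rw [← hw.2, finrank_span_eq_card hw.1, Fintype.card_fin]

theorem IsBasisOf.apply_mem {r : ℕ} {w : Fin r → E → K} {V : Submodule K (E → K)}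
    (hw : IsBasisOf w V) (i : Fin r) : w i ∈ V :=
  hw.2 ▸ Submodule.subset_span ⟨i, rfl⟩

theorem span_range_append {m n : ℕ} (a : Fin m → E → K) (b : Fin n → E → K) :
    Submodule.span K (Set.range (Fin.append a b)) =
      Submodule.span K (Set.range a) ⊔ Submodule.span K (Set.range b) := by
  rw [← Submodule.span_union, ← Set.Sum.elim_range, ← EquivLike.range_comp _ finSumFinEquiv]
  congr 2
  ext (i | i) : 1 <;> simp

section Psi

variable [Fintype E]

theorem exists_isBasisOf (V : Submodule K (E → K)) :
    ∃ u : Fin (Module.finrank K V) → E → K, IsBasisOf u V := by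
  let b := Module.finBasis K V
  refine ⟨V.subtype ∘ b, b.linearIndependent.map' V.subtype V.ker_subtype, ?_⟩
  rw [Set.range_comp, Submodule.span_image, b.span_eq, Submodule.map_top, Submodule.range_subtype]

theorem psi_eq_sum {r : ℕ} (w : Fin r → E → K) :
    psi w = ∑ B : Finset E, C (cSq w B) * ∏ e ∈ B, X e := by
  refine Finset.sum_subset (Finset.subset_univ _) fun B _ hB => ?_
  rw [cSq_of_card_ne w (by simpa using hB), map_zero, zero_mul]

theorem psi_smul_sum {r : ℕ} (w : Fin r → E → K) (P : Matrix (Fin r) (Fin r) K) :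
    psi (fun i => ∑ j, P i j • w j) = C (P.det ^ 2) * psi w := by
  simp only [psi, cSq_smul_sum, map_mul, Finset.mul_sum, mul_assoc]

theorem IsBasisOf.psi_eq {r r' : ℕ} {w : Fin r → E → K} {w' : Fin r' → E → K}
    {V : Submodule K (E → K)} (hw : IsBasisOf w V) (hw' : IsBasisOf w' V) :
    ∃ d : K, d ≠ 0 ∧ psi w = C (d ^ 2) * psi w' := by
  obtain rfl : r = r' := hw.finrank_eq.symm.trans hw'.finrank_eq
  let b := (Module.Basis.span hw.1).map (LinearEquiv.ofEq _ _ hw.2)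
  let b' := (Module.Basis.span hw'.1).map (LinearEquiv.ofEq _ _ hw'.2)
  have hb : ∀ i, (b i : E → K) = w i := fun i => by simp [b, Module.Basis.span_apply]
  have hb' : ∀ i, (b' i : E → K) = w' i := fun i => by simp [b', Module.Basis.span_apply]
  refine ⟨b'.det b, (b'.isUnit_det b).ne_zero, ?_⟩
  rw [Module.Basis.det_apply, ← Matrix.det_transpose, ← psi_smul_sum]
  congr 1
  ext i : 1
  rw [← hb i, ← b'.sum_toMatrix_smul_self b i]
  simp only [Submodule.coe_sum, Submodule.coe_smul, hb', Matrix.transpose_apply]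

theorem rename_psi_subtype (p : E → Prop) [DecidablePred p] [Fintype (Subtype p)] {m : ℕ}
    (a : Fin m → E → K) :
    rename Subtype.val (psi fun i (x : Subtype p) => a i x) =
      ∑ B ∈ (Finset.univ.filter p).powerset, C (cSq a B) * ∏ e ∈ B, X e := by
  rw [psi_eq_sum, map_sum]
  refine Finset.sum_bij' (fun B _ => B.map (Function.Embedding.subtype p))
    (fun B _ => B.subtype p) ?_ ?_ ?_ ?_ ?_
  · intro B _
    refine Finset.mem_powerset.2 fun x hx => ?_
    obtain ⟨y, -, rfl⟩ := Finset.mem_map.1 hx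
    simpa using y.2
  · intro _ _; exact Finset.mem_univ _
  · intro B _; ext x; simpa using fun _ => x.2
  · intro B hB
    rw [Finset.subtype_map, Finset.filter_true_of_mem fun x hx => by
      simpa using Finset.mem_powerset.1 hB hx]
  · intro B _
    rw [map_mul, rename_C, map_prod, Finset.prod_map, ← cSq_comp_embedding]
    simp [rename_X]

end Psi

section Split

variable [Fintype E] [DecidableEq E]

theorem cSq_append_of_left_vanish {m n : ℕ} (a : Fin m → E → K) (b : Fin n → E → K)
    {S : Finset E} (ha : ∀ i, ∀ e ∈ Sᶜ, a i e = 0) {B : Finset E} (hB : (B ∩ S).card ≤ m) :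
    cSq (Fin.append a b) B = cSq a (B ∩ S) * cSq b (B \ S) := by
  rw [cSq_append_comm, cSq_append_of_right_vanish b a ha (by rwa [sdiff_compl]),
    sdiff_compl, Finset.inf_eq_inter, ← Finset.sdiff_eq_inter_compl, mul_comm]

theorem cSq_append_singleton_append {p q : ℕ} {S : Finset E} (u : Fin p → E → K) (z : E → K)
    (v : Fin q → E → K) (hu : ∀ i, ∀ e ∈ Sᶜ, u i e = 0) (hv : ∀ i, ∀ e ∈ S, v i e = 0)
    (B : Finset E) :
    cSq (Fin.append (Fin.append u ![z]) v) B =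
      cSq v (B \ S) * cSq (Fin.append u ![z]) (B ∩ S) +
        cSq (Fin.append ![z] v) (B \ S) * cSq u (B ∩ S) := by
  have hcard := Finset.card_inter_add_card_sdiff B S
  rcases le_or_gt (B ∩ S).card p with hp | hp
  · rw [Fin.append_assoc]
    refine (cSq_comp_equiv _ (finCongr (Nat.add_assoc p 1 q)) B).trans ?_
    rw [cSq_append_of_left_vanish _ _ hu hp,
      cSq_of_card_ne (Fin.append u ![z]) (by omega : (B ∩ S).card ≠ p + 1)]
    ring
  rcases le_or_gt (B \ S).card q with hq | hq
  · rw [cSq_append_of_right_vanish _ _ hv hq, cSq_of_card_ne u hp.ne']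
    ring
  · rw [cSq_of_card_ne _ (by omega : B.card ≠ p + 1 + q), cSq_of_card_ne v hq.ne',
      cSq_of_card_ne u hp.ne']
    ring

theorem sum_powerset_compl_mul_sum_powerset (S : Finset E) (f g : Finset E → K) :
    (∑ B ∈ Sᶜ.powerset, C (f B) * ∏ e ∈ B, X e) * (∑ B ∈ S.powerset, C (g B) * ∏ e ∈ B, X e) =
      ∑ B : Finset E, C (f (B \ S) * g (B ∩ S)) * ∏ e ∈ B, (X e : MvPolynomial E K) := by
  have hsplit : ∀ P ∈ Sᶜ.powerset ×ˢ S.powerset,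
      (P.1 ∪ P.2) \ S = P.1 ∧ (P.1 ∪ P.2) ∩ S = P.2 := by
    rintro ⟨B₁, B₂⟩ h
    simp only [Finset.mem_product, Finset.mem_powerset, Finset.subset_iff, Finset.mem_compl] at h
    constructor <;> ext x <;>
      simp only [Finset.mem_sdiff, Finset.mem_inter, Finset.mem_union] <;> grind
  rw [Finset.sum_mul_sum, ← Finset.sum_product']
  refine Finset.sum_bij' (fun P _ => P.1 ∪ P.2) (fun B _ => (B \ S, B ∩ S)) ?_ ?_ ?_ ?_ ?_
  · intro _ _; exact Finset.mem_univ _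
  · intro B _; simp [Finset.subset_iff]
  · intro P hP; exact Prod.ext (hsplit P hP).1 (hsplit P hP).2
  · intro B _; exact Finset.sdiff_union_inter B S
  · intro P hP
    obtain ⟨h₁, h₂⟩ := hsplit P hP
    have hdisj := Finset.disjoint_sdiff_inter (P.1 ∪ P.2) S
    rw [h₁, h₂] at hdisj ⊢
    rw [Finset.prod_union hdisj, map_mul]
    ring

theorem psi_append_singleton_append {p q : ℕ} (S : Finset E) (u : Fin p → E → K) (z : E → K)
    (v : Fin q → E → K) (hu : ∀ i, ∀ e ∈ Sᶜ, u i e = 0) (hv : ∀ i, ∀ e ∈ S, v i e = 0) :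
    psi (Fin.append (Fin.append u ![z]) v) =
      rename Subtype.val (psi fun i (x : {x // x ∉ S}) => v i x) *
          rename Subtype.val (psi fun i (x : {x // x ∈ S}) => Fin.append u ![z] i x) +
        rename Subtype.val (psi fun i (x : {x // x ∈ Sᶜ}) => Fin.append ![z] v i x) *
          rename Subtype.val (psi fun i (x : {x // x ∉ Sᶜ}) => u i x) := by
  have h_mem (T : Finset E) : Finset.univ.filter (· ∈ T) = T := by ext; simp
  have h_not_mem (T : Finset E) : Finset.univ.filter (· ∉ T) = Tᶜ := by ext; simp
  rw [rename_psi_subtype (· ∉ S), rename_psi_subtype (· ∈ S), rename_psi_subtype (· ∈ Sᶜ),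
    rename_psi_subtype (· ∉ Sᶜ), h_mem, h_mem, h_not_mem, h_not_mem, compl_compl,
    sum_powerset_compl_mul_sum_powerset, sum_powerset_compl_mul_sum_powerset,
    ← Finset.sum_add_distrib, psi_eq_sum]
  simp only [cSq_append_singleton_append u z v hu hv, map_add, add_mul]

end Split

section Configurations

noncomputable def vanishOn (W : Submodule K (E → K)) (F : Finset E) : Submodule K (E → K) :=
  W ⊓ LinearMap.ker (LinearMap.funLeft K K (Subtype.val : F → E))

theorem mem_vanishOn {W : Submodule K (E → K)} {F : Finset E} {x : E → K} :
    x ∈ vanishOn W F ↔ x ∈ W ∧ ∀ e ∈ F, x e = 0 := by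
  simp [vanishOn, funext_iff]

theorem IsBasisOf.contractConfig {r : ℕ} {W : Submodule K (E → K)} {F : Finset E}
    {u : Fin r → E → K} (hu : IsBasisOf u (vanishOn W F)) :
    IsBasisOf (fun i (x : {x // x ∉ F}) => u i x) (contractConfig W F) := by
  let g := LinearMap.funLeft K K (Subtype.val : {x // x ∉ F} → E)
  refine ⟨hu.1.map (f := g) ?_, ?_⟩
  · rw [hu.2]
    refine Submodule.disjoint_def.2 fun x hx hgx => funext fun e => ?_
    by_cases he : e ∈ F
    · exact (mem_vanishOn.1 hx).2 e he
    · exact congrFun hgx ⟨e, he⟩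
  · change Submodule.span K (Set.range (g ∘ u)) = _
    rw [Set.range_comp, Submodule.span_image, hu.2]
    rfl

variable [Fintype E]

theorem finrank_restrictConfig_add_finrank_vanishOn (W : Submodule K (E → K)) (F : Finset E) :
    Module.finrank K (restrictConfig W F) + Module.finrank K (vanishOn W F) =
      Module.finrank K W := by
  let f := (LinearMap.funLeft K K (Subtype.val : F → E)).comp W.subtype
  have hrange : LinearMap.range f = restrictConfig W F := by
    rw [LinearMap.range_comp, Submodule.range_subtype]; rfl
  have hker : LinearMap.ker f = (vanishOn W F).comap W.subtype := by
    ext x; simp [f, vanishOn]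
  rw [← f.finrank_range_add_finrank_ker, hrange, hker,
    (Submodule.comapSubtypeEquivOfLe (p := vanishOn W F) inf_le_left).finrank_eq]

theorem disjoint_vanishOn_compl [DecidableEq E] (W : Submodule K (E → K))
    (F : Finset E) : Disjoint (vanishOn W F) (vanishOn W Fᶜ) := by
  refine Submodule.disjoint_def.2 fun x hx hx' => funext fun e => ?_
  by_cases he : e ∈ F
  · exact (mem_vanishOn.1 hx).2 e he
  · exact (mem_vanishOn.1 hx').2 e (Finset.mem_compl.2 he)

theorem isBasisOf_restrictConfig {m : ℕ} {W : Submodule K (E → K)} {F : Finset E}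
    (a : Fin m → E → K) (ha : Submodule.span K (Set.range a) ⊔ vanishOn W F = W)
    (hm : m + Module.finrank K (vanishOn W F) = Module.finrank K W) :
    IsBasisOf (fun i (x : F) => a i x) (restrictConfig W F) := by
  let g := LinearMap.funLeft K K (Subtype.val : F → E)
  have hspan : Submodule.span K (Set.range fun i (x : F) => a i x) = restrictConfig W F := by
    change Submodule.span K (Set.range (g ∘ a)) = _
    have h0 : (vanishOn W F).map g = ⊥ := LinearMap.le_ker_iff_map.1 inf_le_right
    rw [Set.range_comp, Submodule.span_image, restrictConfig, ← ha, Submodule.map_sup]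
    change _ = _ ⊔ (vanishOn W F).map g
    rw [h0, sup_bot_eq]
  refine ⟨?_, hspan⟩
  rw [linearIndependent_iff_card_eq_finrank_span, Set.finrank, hspan, Fintype.card_fin]
  have := finrank_restrictConfig_add_finrank_vanishOn W F
  omega

theorem exists_isBasisOf_append_singleton_append {p q : ℕ}
    {W U₁ U₂ : Submodule K (E → K)} {u : Fin p → E → K} {v : Fin q → E → K}
    (hu : IsBasisOf u U₁) (hv : IsBasisOf v U₂) (hU₁ : U₁ ≤ W) (hU₂ : U₂ ≤ W)
    (hdisj : Disjoint U₁ U₂) (hdim : p + 1 + q = Module.finrank K W) :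
    ∃ z, IsBasisOf (Fin.append (Fin.append u ![z]) v) W ∧
      Submodule.span K (Set.range (Fin.append u ![z])) ⊔ U₂ = W ∧
      Submodule.span K (Set.range (Fin.append ![z] v)) ⊔ U₁ = W := by
  have hD : Module.finrank K ↥(U₁ ⊔ U₂) = p + q := by
    have := Submodule.finrank_sup_add_finrank_inf_eq U₁ U₂
    rw [disjoint_iff.1 hdisj, finrank_bot, hu.finrank_eq, hv.finrank_eq] at this
    omega
  obtain ⟨z, hzW, hzD⟩ := SetLike.exists_of_lt <|
    lt_of_le_of_ne (sup_le hU₁ hU₂) fun h => by rw [h] at hD; omega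
  have hz0 : z ≠ 0 := fun h => hzD (h ▸ zero_mem _)
  have hz : U₁ ⊔ K ∙ z ⊔ U₂ = W := by
    rw [sup_right_comm]
    refine Submodule.eq_of_le_of_finrank_le
      (sup_le (sup_le hU₁ hU₂) ((Submodule.span_singleton_le_iff_mem _ _).2 hzW)) ?_
    have := Submodule.finrank_sup_add_finrank_inf_eq (U₁ ⊔ U₂) (K ∙ z)
    rw [disjoint_iff.1 ((Submodule.disjoint_span_singleton' hz0).2 hzD), finrank_bot,
      finrank_span_singleton hz0] at this
    omega
  have hsingle : Submodule.span K (Set.range ![z]) = K ∙ z := by simp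
  have hspan : Submodule.span K (Set.range (Fin.append (Fin.append u ![z]) v)) = W := by
    rw [span_range_append, span_range_append, hu.2, hv.2, hsingle, hz]
  refine ⟨z, ⟨?_, hspan⟩, ?_, ?_⟩
  · rw [linearIndependent_iff_card_eq_finrank_span, Set.finrank, hspan, Fintype.card_fin, hdim]
  · rw [span_range_append, hu.2, hsingle, hz]
  · rw [span_range_append, hv.2, hsingle, ← hz, sup_comm, sup_assoc]

end Configurations

section Separation

theorem indep_iff {W : Submodule K (E → K)} {S : Finset E} :
    Indep W S ↔ ∀ g : E → K, (∀ x ∈ W, ∑ e ∈ S, g e * x e = 0) → ∀ e ∈ S, g e = 0 := by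
  classical
  have hsum (g : E → K) (x : W) :
      (∑ i : S, g i • coordFun W i) x = ∑ e ∈ S, g e * (x : E → K) e := by
    simpa [coordFun] using Finset.sum_attach S (fun e => g e * (x : E → K) e)
  rw [Indep, Fintype.linearIndependent_iff]
  constructor
  · intro h g hg e he
    exact h (fun i => g i) (LinearMap.ext fun x => (hsum g x).trans (hg x x.2)) ⟨e, he⟩
  · intro h g hg i
    have key := h (fun e => if he : e ∈ S then g ⟨e, he⟩ else 0) (fun x hx => ?_) i i.2
    · simpa using key
    rw [← hsum _ ⟨x, hx⟩]
    simpa using LinearMap.congr_fun hg ⟨x, hx⟩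

variable [Fintype E]

theorem rkOn_univ (W : Submodule K (E → K)) : rkOn W Finset.univ = Module.finrank K W :=
  (Submodule.equivMapOfInjective _
    (LinearMap.funLeft_injective_of_surjective _ _ _ fun e => ⟨⟨e, Finset.mem_univ e⟩, rfl⟩)
    W).finrank_eq.symm

variable [DecidableEq E]

theorem sum_inter_eq_zero_of_sup_vanishOn {W : Submodule K (E → K)} {C S : Finset E} {g : E → K}
    (hg : ∀ x ∈ W, ∑ e ∈ C, g e * x e = 0) (hW : vanishOn W Sᶜ ⊔ vanishOn W S = W)
    {x : E → K} (hx : x ∈ W) : ∑ e ∈ C ∩ S, g e * x e = 0 := by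
  rw [← hW] at hx
  obtain ⟨a, ha, b, hb, rfl⟩ := Submodule.mem_sup.1 hx
  have hb0 : ∑ e ∈ C ∩ S, g e * b e = 0 := Finset.sum_eq_zero fun e he => by
    rw [(mem_vanishOn.1 hb).2 e (Finset.mem_inter.1 he).2, mul_zero]
  have ha0 : ∑ e ∈ C ∩ S, g e * a e = ∑ e ∈ C, g e * a e := by
    refine Finset.sum_subset Finset.inter_subset_left fun e heC he => ?_
    rw [(mem_vanishOn.1 ha).2 e (by simpa [heC] using he), mul_zero]
  simp only [Pi.add_apply, mul_add, Finset.sum_add_distrib, hb0, ha0, hg a (mem_vanishOn.1 ha).1,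
    add_zero]

theorem IsCircuit.subset_or_subset_compl {W : Submodule K (E → K)} {C S : Finset E}
    (hC : IsCircuit W C) (hW : vanishOn W Sᶜ ⊔ vanishOn W S = W) : C ⊆ S ∨ C ⊆ Sᶜ := by
  obtain ⟨g, hg, e, heC, hge⟩ :
      ∃ g : E → K, (∀ x ∈ W, ∑ e ∈ C, g e * x e = 0) ∧ ∃ e ∈ C, g e ≠ 0 := by
    simpa [indep_iff] using hC.1
  have hW' : vanishOn W Sᶜᶜ ⊔ vanishOn W Sᶜ = W := by rw [compl_compl, sup_comm, hW]
  rw [or_iff_not_and_not]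
  rintro ⟨hS, hSc⟩
  have hgS := indep_iff.1 (hC.2 _ (inf_lt_left.2 hS)) g fun x hx =>
    sum_inter_eq_zero_of_sup_vanishOn hg hW hx
  have hgSc := indep_iff.1 (hC.2 _ (inf_lt_left.2 hSc)) g fun x hx =>
    sum_inter_eq_zero_of_sup_vanishOn hg hW' hx
  by_cases he : e ∈ S
  · exact hge (hgS e (Finset.mem_inter.2 ⟨heC, he⟩))
  · exact hge (hgSc e (Finset.mem_inter.2 ⟨heC, Finset.mem_compl.2 he⟩))

theorem Connected.finrank_vanishOn_add_lt {W : Submodule K (E → K)} (hconn : Connected W)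
    {S : Finset E} (hS : S.Nonempty) (hSc : Sᶜ.Nonempty) :
    Module.finrank K (vanishOn W Sᶜ) + Module.finrank K (vanishOn W S) < Module.finrank K W := by
  by_contra! hle
  have hW : vanishOn W Sᶜ ⊔ vanishOn W S = W := by
    refine Submodule.eq_of_le_of_finrank_le (sup_le inf_le_left inf_le_left) ?_
    have := Submodule.finrank_sup_add_finrank_inf_eq (vanishOn W Sᶜ) (vanishOn W S)
    rw [disjoint_iff.1 (disjoint_vanishOn_compl W S).symm, finrank_bot] at this
    omega
  obtain ⟨e, he⟩ := hS
  obtain ⟨f, hf⟩ := hSc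
  obtain ⟨C, hC, heC, hfC⟩ := hconn.2 e f fun hef => Finset.mem_compl.1 hf (hef ▸ he)
  rcases hC.subset_or_subset_compl hW with h | h
  · exact Finset.mem_compl.1 hf (h hfC)
  · exact Finset.mem_compl.1 (h heC) he

theorem KSep.finrank_eq_of_connected {W : Submodule K (E → K)} {S : Finset E}
    (hconn : Connected W) (hsep : KSep W 2 S) :
    Module.finrank K (vanishOn W Sᶜ) + 1 + Module.finrank K (vanishOn W S) =
      Module.finrank K W := by
  obtain ⟨hlt, hS, hSc⟩ := hsep
  have h₁ := finrank_restrictConfig_add_finrank_vanishOn W S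
  have h₂ := finrank_restrictConfig_add_finrank_vanishOn W Sᶜ
  have h₃ := hconn.finrank_vanishOn_add_lt (Finset.card_pos.1 (by omega : 0 < S.card))
    (Finset.card_pos.1 (by omega : 0 < Sᶜ.card))
  rw [rkOn_univ] at hlt
  change Module.finrank K (restrictConfig W S) + Module.finrank K (restrictConfig W Sᶜ) < _ at hlt
  omega

end Separation

variable [Fintype E] [DecidableEq E]

/-- **Theorem (Configuration polynomials and 2-separations).**
Let `W ⊆ K^E` realize a connected matroid and let `E = E₁ ⊔ E₁ᶜ` be a `2`-separation.
Then, up to nonzero square constant factors,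
`ψ_W = ψ_{W/E₁} · ψ_{W|_{E₁}} + ψ_{W|_{E₂}} · ψ_{W/E₂}` where `E₂ = E₁ᶜ`. -/
theorem psi_two_separation
    (W : Submodule K (E → K)) (E₁ : Finset E) {r r₁ r₂ r₃ r₄ : ℕ}
    (w : Fin r → E → K)
    (wres₁ : Fin r₁ → {x : E // x ∈ E₁} → K)
    (wcon₁ : Fin r₂ → {x : E // x ∉ E₁} → K)
    (wres₂ : Fin r₃ → {x : E // x ∈ E₁ᶜ} → K)
    (wcon₂ : Fin r₄ → {x : E // x ∉ E₁ᶜ} → K)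
    (hw : IsBasisOf w W)
    (hwres₁ : IsBasisOf wres₁ (restrictConfig W E₁))
    (hwcon₁ : IsBasisOf wcon₁ (contractConfig W E₁))
    (hwres₂ : IsBasisOf wres₂ (restrictConfig W E₁ᶜ))
    (hwcon₂ : IsBasisOf wcon₂ (contractConfig W E₁ᶜ))
    (hconn : Connected W)
    (hsep : KSep W 2 E₁) :
    ∃ a b : K, a ≠ 0 ∧ b ≠ 0 ∧
      psi w = MvPolynomial.C (a ^ 2) *
            MvPolynomial.rename Subtype.val (psi wcon₁) *
            MvPolynomial.rename Subtype.val (psi wres₁)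
        + MvPolynomial.C (b ^ 2) *
            MvPolynomial.rename Subtype.val (psi wres₂) *
            MvPolynomial.rename Subtype.val (psi wcon₂) := by
  have hdim := hsep.finrank_eq_of_connected hconn
  obtain ⟨u, hu⟩ := exists_isBasisOf (vanishOn W E₁ᶜ)
  obtain ⟨v, hv⟩ := exists_isBasisOf (vanishOn W E₁)
  obtain ⟨z, hw', hres₁, hres₂⟩ := exists_isBasisOf_append_singleton_append hu hv inf_le_left
    inf_le_left (disjoint_vanishOn_compl W E₁).symm hdim
  obtain ⟨d₀, hd₀, h₀⟩ := hw.psi_eq hw'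
  obtain ⟨d₁, hd₁, h₁⟩ := (isBasisOf_restrictConfig _ hres₁ (by omega)).psi_eq hwres₁
  obtain ⟨d₂, hd₂, h₂⟩ := hv.contractConfig.psi_eq hwcon₁
  obtain ⟨d₃, hd₃, h₃⟩ := (isBasisOf_restrictConfig _ hres₂ (by omega)).psi_eq hwres₂
  obtain ⟨d₄, hd₄, h₄⟩ := hu.contractConfig.psi_eq hwcon₂
  refine ⟨d₀ * d₂ * d₁, d₀ * d₃ * d₄, mul_ne_zero (mul_ne_zero hd₀ hd₂) hd₁,
    mul_ne_zero (mul_ne_zero hd₀ hd₃) hd₄, ?_⟩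
  rw [h₀, psi_append_singleton_append E₁ u z v (fun i => (mem_vanishOn.1 (hu.apply_mem i)).2)
    (fun i => (mem_vanishOn.1 (hv.apply_mem i)).2), h₁, h₂, h₃, h₄]
  simp only [map_mul, rename_C, mul_pow]
  ring

end Config
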